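/- arXiv:1508.06043 — 12 statements merged into one kernel-verified Lean document; each statement's English description precedes it below -/
import Mathlib

section
/- Let 0 ≤ a₁ < a₂ < a₃ < 2π be angles on a circle with a₂ − a₁ < π, a₃ − a₂ < π, and a₃ − a₁ > π (so the inscribed triangle with vertices at these angles is acute), and assume the three arc lengths a₂ − a₁, a₃ − a₂, 2π − (a₃ − a₁) are pairwise distinct (so the triangle is scalene). Then there exist masses m₁, m₂, m₃ > 0 such that for each i ∈ {1,2,3}, ∑_{j ≠ i} m_j · sin(a_j − a_i) / |sin(a_j − a_i)|³ = 0. -/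
/-!
The equation of body `i` reads `∑_{j ≠ i} ± m_j / sin²(a_j - a_i) = 0`, the sign being that of
`sin (a_j - a_i)`. Acuteness says that the three cyclic arcs `a₂ - a₁`, `a₃ - a₂`, `a₁ - a₃ + 2π`
lie in `(0, π)`, so their sines `A, B, C` are positive, and each equation becomes a difference
of two terms. Taking for `m_i` the product of the squared sines of the two sides meeting at
body `i` makes every difference vanish.
-/

open Real

section OrderedField

variable {K : Type*} [Field K] [LinearOrder K] [IsStrictOrderedRing K]

theorem mul_div_abs_pow_three_of_pos {m s : K} (hs : 0 < s) : m * s / |s| ^ 3 = m / s ^ 2 := by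
  rw [abs_of_pos hs]
  field_simp

theorem mul_neg_div_abs_neg_pow_three_of_pos {m s : K} (hs : 0 < s) :
    m * -s / |-s| ^ 3 = -(m / s ^ 2) := by
  rw [abs_neg, mul_neg, neg_div, mul_div_abs_pow_three_of_pos hs]

theorem exists_pos_masses_balance {A B C : K} (hA : 0 < A) (hB : 0 < B) (hC : 0 < C) :
    ∃ m₁ m₂ m₃ : K, 0 < m₁ ∧ 0 < m₂ ∧ 0 < m₃ ∧
      m₂ * A / |A| ^ 3 + m₃ * -C / |-C| ^ 3 = 0 ∧
      m₁ * -A / |-A| ^ 3 + m₃ * B / |B| ^ 3 = 0 ∧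
      m₁ * C / |C| ^ 3 + m₂ * -B / |-B| ^ 3 = 0 := by
  refine ⟨A ^ 2 * C ^ 2, A ^ 2 * B ^ 2, B ^ 2 * C ^ 2, by positivity, by positivity,
    by positivity, ?_, ?_, ?_⟩ <;>
  simp only [mul_div_abs_pow_three_of_pos, mul_neg_div_abs_neg_pow_three_of_pos, hA, hB, hC] <;>
  field_simp <;> ring

end OrderedField

theorem exists_masses_equatorial_relative_equilibrium_general
    (a₁ a₂ a₃ : ℝ) (h0 : 0 ≤ a₁) (h12 : a₁ < a₂) (h23 : a₂ < a₃) (h3 : a₃ < 2 * Real.pi)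
    (hacute12 : a₂ - a₁ < Real.pi) (hacute23 : a₃ - a₂ < Real.pi)
    (hacute13 : a₃ - a₁ > Real.pi) :
    ∃ m₁ m₂ m₃ : ℝ, 0 < m₁ ∧ 0 < m₂ ∧ 0 < m₃ ∧
      m₂ * Real.sin (a₂ - a₁) / |Real.sin (a₂ - a₁)| ^ 3
        + m₃ * Real.sin (a₃ - a₁) / |Real.sin (a₃ - a₁)| ^ 3 = 0 ∧
      m₁ * Real.sin (a₁ - a₂) / |Real.sin (a₁ - a₂)| ^ 3
        + m₃ * Real.sin (a₃ - a₂) / |Real.sin (a₃ - a₂)| ^ 3 = 0 ∧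
      m₁ * Real.sin (a₁ - a₃) / |Real.sin (a₁ - a₃)| ^ 3
        + m₂ * Real.sin (a₂ - a₃) / |Real.sin (a₂ - a₃)| ^ 3 = 0 := by
  have h₁₂ : 0 < sin (a₂ - a₁) := sin_pos_of_pos_of_lt_pi (by linarith) hacute12
  have h₂₃ : 0 < sin (a₃ - a₂) := sin_pos_of_pos_of_lt_pi (by linarith) hacute23
  have h₃₁ : 0 < sin (a₁ - a₃) := by
    rw [← sin_add_two_pi]
    exact sin_pos_of_pos_of_lt_pi (by linarith) (by linarith)
  obtain ⟨m₁, m₂, m₃, hm₁, hm₂, hm₃, e₁, e₂, e₃⟩ := exists_pos_masses_balance h₁₂ h₂₃ h₃₁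
  simp only [← sin_neg, neg_sub] at e₁ e₂ e₃
  exact ⟨m₁, m₂, m₃, hm₁, hm₂, hm₃, e₁, e₂, e₃⟩

/-- For every acute scalene triangle inscribed in the equator (vertices at angles
`a₁ < a₂ < a₃`), there exist positive masses making the equatorial relative
equilibrium equations hold. -/
theorem exists_masses_equatorial_relative_equilibrium
    (a₁ a₂ a₃ : ℝ) (h0 : 0 ≤ a₁) (h12 : a₁ < a₂) (h23 : a₂ < a₃) (h3 : a₃ < 2 * Real.pi)
    (hacute12 : a₂ - a₁ < Real.pi) (hacute23 : a₃ - a₂ < Real.pi)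
    (hacute13 : a₃ - a₁ > Real.pi)
    (hscalene1 : a₂ - a₁ ≠ a₃ - a₂)
    (hscalene2 : a₂ - a₁ ≠ 2 * Real.pi - (a₃ - a₁))
    (hscalene3 : a₃ - a₂ ≠ 2 * Real.pi - (a₃ - a₁)) :
    ∃ m₁ m₂ m₃ : ℝ, 0 < m₁ ∧ 0 < m₂ ∧ 0 < m₃ ∧
      m₂ * Real.sin (a₂ - a₁) / |Real.sin (a₂ - a₁)| ^ 3
        + m₃ * Real.sin (a₃ - a₁) / |Real.sin (a₃ - a₁)| ^ 3 = 0 ∧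
      m₁ * Real.sin (a₁ - a₂) / |Real.sin (a₁ - a₂)| ^ 3
        + m₃ * Real.sin (a₃ - a₂) / |Real.sin (a₃ - a₂)| ^ 3 = 0 ∧
      m₁ * Real.sin (a₁ - a₃) / |Real.sin (a₁ - a₃)| ^ 3
        + m₂ * Real.sin (a₂ - a₃) / |Real.sin (a₂ - a₃)| ^ 3 = 0 :=
  exists_masses_equatorial_relative_equilibrium_general a₁ a₂ a₃ h0 h12 h23 h3 hacute12 hacute23
    hacute13
end

section
/- Let m, M > 0, let a ∈ (π/2, π), and let γ ∈ (0, 1). Set A = 1 − cos a, B = 2 − γ(1 − cos a), C = 1 − cos 2a, D = 2 − γ(1 − cos 2a). If (2m − M)/(A^{1/2} B^{3/2}) = m/(C^{1/2} D^{3/2}) and M/(A^{3/2} B^{3/2}) = −2m cos a/(C^{3/2} D^{3/2}), then cos a = −M/(2m). -/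
open Real

/-- The reduced equations for an isosceles relative equilibrium on a circle parallel
with the equator of `S²_κ` force `cos a = -M/(2m)`. -/
theorem isosceles_relative_equilibrium_cos (m M a γ A B C D : ℝ)
    (hm : 0 < m) (hM : 0 < M)
    (ha₁ : Real.pi / 2 < a) (ha₂ : a < Real.pi)
    (hγ₁ : 0 < γ) (hγ₂ : γ < 1)
    (hA : A = 1 - Real.cos a) (hB : B = 2 - γ * (1 - Real.cos a))
    (hC : C = 1 - Real.cos (2 * a)) (hD : D = 2 - γ * (1 - Real.cos (2 * a)))
    (h₁ : (2 * m - M) / (A ^ ((1 : ℝ) / 2) * B ^ ((3 : ℝ) / 2))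
        = m / (C ^ ((1 : ℝ) / 2) * D ^ ((3 : ℝ) / 2)))
    (h₂ : M / (A ^ ((3 : ℝ) / 2) * B ^ ((3 : ℝ) / 2))
        = -(2 * m * Real.cos a) / (C ^ ((3 : ℝ) / 2) * D ^ ((3 : ℝ) / 2))) :
    Real.cos a = -(M / (2 * m)) := by
  -- basic bounds on cos a
  have hcos_neg : Real.cos a < 0 := by
    have := Real.cos_lt_cos_of_nonneg_of_le_pi (by positivity : (0:ℝ) ≤ Real.pi / 2)
      (le_of_lt ha₂) ha₁
    simpa [Real.cos_pi_div_two] using this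
  have hcos_gt : -1 < Real.cos a := by
    have h0a : (0:ℝ) ≤ a := by
      have := Real.pi_pos; linarith
    have := Real.cos_lt_cos_of_nonneg_of_le_pi h0a le_rfl ha₂
    simpa [Real.cos_pi] using this
  have hApos : 0 < A := by rw [hA]; linarith
  have hC2 : C = 2 * A * (1 + Real.cos a) := by
    rw [hC, hA, Real.cos_two_mul]; ring
  have hCpos : 0 < C := by
    rw [hC2]; have : 0 < 1 + Real.cos a := by linarith
    positivity
  have hBpos : 0 < B := by
    rw [hB, ← hA]
    nlinarith [mul_pos hγ₁ hApos]
  have hDpos : 0 < D := by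
    rw [hD, ← hC]
    have hCle : C ≤ 2 := by
      rw [hC]; have := Real.neg_one_le_cos (2 * a); linarith
    nlinarith [mul_pos hγ₁ hCpos]
  -- rpow facts
  have hsA : 0 < A ^ ((1:ℝ)/2) := Real.rpow_pos_of_pos hApos _
  have hsC : 0 < C ^ ((1:ℝ)/2) := Real.rpow_pos_of_pos hCpos _
  have htB : 0 < B ^ ((3:ℝ)/2) := Real.rpow_pos_of_pos hBpos _
  have htD : 0 < D ^ ((3:ℝ)/2) := Real.rpow_pos_of_pos hDpos _
  have hA32 : A ^ ((3:ℝ)/2) = A * A ^ ((1:ℝ)/2) := by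
    rw [show (3:ℝ)/2 = 1 + 1/2 by norm_num, Real.rpow_add hApos, Real.rpow_one]
  have hC32 : C ^ ((3:ℝ)/2) = C * C ^ ((1:ℝ)/2) := by
    rw [show (3:ℝ)/2 = 1 + 1/2 by norm_num, Real.rpow_add hCpos, Real.rpow_one]
  set sA := A ^ ((1:ℝ)/2) with hsAdef
  set sC := C ^ ((1:ℝ)/2) with hsCdef
  set tB := B ^ ((3:ℝ)/2) with htBdef
  set tD := D ^ ((3:ℝ)/2) with htDdef
  rw [hA32] at h₂
  rw [hC32] at h₂
  have he₁ : (2 * m - M) * (sC * tD) = m * (sA * tB) := by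
    rw [div_eq_div_iff (by positivity) (by positivity)] at h₁
    linarith [h₁]
  have he₂ : M * (C * sC * tD) = -(2 * m * Real.cos a) * (A * sA * tB) := by
    rw [div_eq_div_iff (by positivity) (by positivity)] at h₂
    linarith [h₂]
  have h3 : (M * C) * (m * (sC * tD))
      = (-(2 * Real.cos a) * A * (2 * m - M)) * (m * (sC * tD)) := by
    linear_combination m * he₂ + (2 * m * Real.cos a * A) * he₁
  have key : M * C = -(2 * Real.cos a) * A * (2 * m - M) :=
    mul_right_cancel₀ (by positivity) h3
  rw [hC2] at key
  have h4 : (2 * M * (1 + Real.cos a)) * A = (-(2 * Real.cos a) * (2 * m - M)) * A := by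
    linear_combination key
  have h5 := mul_right_cancel₀ hApos.ne' h4
  have hM2 : M = -(2 * m * Real.cos a) := by linear_combination h5 / 2
  field_simp
  linarith [hM2]
end

section
/- For every γ with 16/25 < γ < 2/3, there exist exactly two values s ∈ (−1, 0) such that γ(2s + 3)(1 − s) = 2; one of them lies in (−1, −1/4) and the other in (−1/4, 0), and neither equals −1/2. -/
/-- For `16/25 < γ < 2/3` there are exactly two solutions `s ∈ (-1,0)` of
`γ(2s+3)(1-s) = 2`: one in `(-1,-1/4)`, one in `(-1/4,0)`, neither equal to `-1/2`. -/
theorem two_isosceles_shapes (γ : ℝ) (h₁ : 16 / 25 < γ) (h₂ : γ < 2 / 3) :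
    ∃ s₁ s₂ : ℝ,
      s₁ ∈ Set.Ioo (-1 : ℝ) (-(1 / 4)) ∧ s₂ ∈ Set.Ioo (-(1 / 4) : ℝ) 0 ∧
      γ * (2 * s₁ + 3) * (1 - s₁) = 2 ∧ γ * (2 * s₂ + 3) * (1 - s₂) = 2 ∧
      s₁ ≠ -(1 / 2) ∧ s₂ ≠ -(1 / 2) ∧
      ∀ s ∈ Set.Ioo (-1 : ℝ) 0, γ * (2 * s + 3) * (1 - s) = 2 → s = s₁ ∨ s = s₂ := by
  have hγ : (0:ℝ) < γ := by linarith
  set D : ℝ := 25 * γ ^ 2 - 16 * γ with hD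
  have hDpos : 0 < D := by nlinarith
  set d : ℝ := Real.sqrt D with hd
  have hdpos : 0 < d := Real.sqrt_pos.mpr hDpos
  have hdsq : d ^ 2 = D := Real.sq_sqrt hDpos.le
  have hdlt3γ : d < 3 * γ := by
    nlinarith [hdpos, hdsq]
  have hdltγ : d < γ := by
    nlinarith [hdpos, hdsq]
  refine ⟨(-γ - d) / (4 * γ), (-γ + d) / (4 * γ), ⟨?_, ?_⟩, ⟨?_, ?_⟩, ?_, ?_, ?_, ?_, ?_⟩
  · rw [lt_div_iff₀ (by linarith)]; linarith
  · rw [div_lt_iff₀ (by linarith)]; linarith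
  · rw [lt_div_iff₀ (by linarith)]; linarith
  · rw [div_lt_iff₀ (by linarith)]; linarith
  · field_simp; nlinarith [hdsq]
  · field_simp; nlinarith [hdsq]
  · intro h
    have : -γ - d = -(1/2) * (4 * γ) := by
      field_simp at h; linarith [h]
    nlinarith [this, hdsq]
  · intro h
    have : -γ + d = -(1/2) * (4 * γ) := by
      field_simp at h; linarith [h]
    nlinarith [this, hdsq]
  · intro s _ hs
    have key : 2 * γ * (s - (-γ - d) / (4 * γ)) * (s - (-γ + d) / (4 * γ)) = 0 := by
      field_simp
      nlinarith [hdsq, hs]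
    rcases mul_eq_zero.mp key with h | h
    · rcases mul_eq_zero.mp h with h | h
      · nlinarith
      · left; linarith [sub_eq_zero.mp h]
    · right; linarith [sub_eq_zero.mp h]
end

section
/- For every γ with 2/3 < γ < 1, there exists exactly one s ∈ (−1, 0) such that γ(2s + 3)(1 − s) = 2, and this s lies in (−1, −1/2). -/
/-- For `2/3 < γ < 1` there is exactly one solution `s ∈ (-1,0)` of
`γ(2s+3)(1-s) = 2`, and it lies in `(-1,-1/2)`. -/
theorem one_isosceles_shape (γ : ℝ) (h₁ : 2 / 3 < γ) (h₂ : γ < 1) :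
    ∃ s : ℝ, s ∈ Set.Ioo (-1 : ℝ) (-(1 / 2)) ∧ γ * (2 * s + 3) * (1 - s) = 2 ∧
      ∀ s' ∈ Set.Ioo (-1 : ℝ) 0, γ * (2 * s' + 3) * (1 - s') = 2 → s' = s := by
  have hγ0 : (0:ℝ) < γ := by linarith
  have hD0 : (0:ℝ) ≤ 25*γ^2 - 16*γ := by nlinarith
  set r : ℝ := Real.sqrt (25*γ^2 - 16*γ) with hrdef
  have hr2 : r^2 = 25*γ^2 - 16*γ := Real.sq_sqrt hD0
  have hr0 : (0:ℝ) ≤ r := Real.sqrt_nonneg _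
  have hrγ : γ < r := by nlinarith
  have hr3γ : r < 3*γ := by nlinarith
  have h4γ : (0:ℝ) < 4*γ := by linarith
  set s : ℝ := (-γ - r)/(4*γ) with hsdef
  have hs1 : -1 < s := by
    rw [hsdef, lt_div_iff₀ h4γ]; linarith
  have hs2 : s < -(1/2) := by
    rw [hsdef, div_lt_iff₀ h4γ]; linarith
  have heq : γ * (2 * s + 3) * (1 - s) = 2 := by
    rw [hsdef]
    field_simp
    nlinarith [hr2]
  refine ⟨s, ⟨hs1, hs2⟩, heq, ?_⟩
  rintro s' ⟨hs'1, hs'2⟩ heq'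
  have key : γ * (s - s') * (2*s + 2*s' + 1) = 0 := by nlinarith [heq, heq']
  rcases mul_eq_zero.1 key with h | h
  · rcases mul_eq_zero.1 h with h | h
    · exact absurd h (ne_of_gt hγ0)
    · linarith [sub_eq_zero.1 h]
  · nlinarith
end

section
/- Let δ < 0 and let s ∈ (−1, 0) satisfy 4δs³ + 4δs² + (4 − 5δ)s − 3δ + 2 = 0. Then s = −1/2. -/
/-- For negative height parameter `δ < 0` (hyperbolic case), the only root of the
isosceles shape cubic in `(-1,0)` is `s = -1/2` (the equilateral case). -/
theorem hyperbolic_only_equilateral (δ s : ℝ) (hδ : δ < 0)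
    (hs : s ∈ Set.Ioo (-1 : ℝ) 0)
    (h : 4 * δ * s ^ 3 + 4 * δ * s ^ 2 + (4 - 5 * δ) * s - 3 * δ + 2 = 0) :
    s = -(1 / 2) := by
  obtain ⟨h1, h2⟩ := hs
  -- The cubic factors as (2s+1)(2δs² + δs + 2 - 3δ)
  have hQ : 2 * δ * s ^ 2 + δ * s + 2 - 3 * δ > 0 := by nlinarith [mul_pos (by linarith : (0:ℝ) < 2*s+3) (by linarith : (0:ℝ) < 1 - s)]
  have hfac : (2 * s + 1) * (2 * δ * s ^ 2 + δ * s + 2 - 3 * δ) = 0 := by ring_nf; ring_nf at h; linarith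
  have := mul_eq_zero.mp hfac
  rcases this with h' | h'
  · linarith
  · linarith
end

section
/- Let κ ∈ ℝ, m > 0, r > 0 with κr² < 1, let θ ∈ (0, π/2) satisfy cos θ = √(1 − κr²)/(1 + √(1 − κr²)), and let α ∈ ℝ satisfy α² = m(1 − κr² + √(1 − κr²))/(r³(1 − κr²)(1 + √(1 − κr²))). Define x₂(t) = r cos(αt), y₂(t) = r sin(αt), x₃(t) = r cos(αt + θ), y₃(t) = r sin(αt + θ). Then for every t ∈ ℝ these functions satisfy the four differential equations ẍ₂ = m(κρ₁₂²/2 − 1)x₂ / (ρ₁₂³(1 − κρ₁₂²/4)^{3/2}) − κ(ẋ₂² + ẏ₂² + κB₂)x₂, ÿ₂ = m(κρ₁₂²/2 − 1)y₂ / (ρ₁₂³(1 − κρ₁₂²/4)^{3/2}) − κ(ẋ₂² + ẏ₂² + κB₂)y₂, ẍ₃ = m(κρ₁₃²/2 − 1)x₃ / (ρ₁₃³(1 − κρ₁₃²/4)^{3/2}) − κ(ẋ₃² + ẏ₃² + κB₃)x₃, ÿ₃ = m(κρ₁₃²/2 − 1)y₃ / (ρ₁₃³(1 − κρ₁₃²/4)^{3/2})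 − κ(ẋ₃² + ẏ₃² + κB₃)y₃, where ρ₁₂² = x₂² + y₂² + κ(x₂² + y₂²)²/(1 + √(1 − κ(x₂² + y₂²)))², ρ₁₃² = x₃² + y₃² + κ(x₃² + y₃²)²/(1 + √(1 − κ(x₃² + y₃²)))², B₂ = (x₂ẋ₂ + y₂ẏ₂)²/(1 − κ(x₂² + y₂²)), and B₃ = (x₃ẋ₃ + y₃ẏ₃)²/(1 − κ(x₃² + y₃²)). -/
open Real

/-! A massless body moving uniformly on a circle of radius `r` about the attracting mass feels
no force from the other massless body, so each of `m₂`, `m₃` separately solves its own equation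
of motion, whatever the phase `θ` between them. On the circle the chord distance satisfies
`ρ² (1 - κρ²/4) = r²` and `κρ²/2 - 1 = -√(1 - κr²)`, the radial velocity term `B` vanishes,
and the equation reduces to the centripetal balance `α² r³ √(1 - κr²) = m`, which is what the
prescribed value of `α²` simplifies to. -/

/-- `ρ²` from the origin: the squared (chord) distance between a body at intrinsic
coordinates `(x, y)` and the body fixed at the origin, on the surface of
curvature `κ`. -/
noncomputable def rhoSqOrigin (κ x y : ℝ) : ℝ :=
  x ^ 2 + y ^ 2 + κ * (x ^ 2 + y ^ 2) ^ 2 / (1 + Real.sqrt (1 - κ * (x ^ 2 + y ^ 2))) ^ 2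

/-- The term `B = (xẋ + yẏ)²/(1 - κ(x² + y²))` from the equations of motion. -/
noncomputable def Bterm (κ x y xd yd : ℝ) : ℝ :=
  (x * xd + y * yd) ^ 2 / (1 - κ * (x ^ 2 + y ^ 2))

/-- The right-hand side of the equation of motion for the coordinate `q` (which is `x` or `y`)
of a massless body at `(x, y)` with velocity `(xd, yd)`. -/
noncomputable def planetaryAccel (κ m x y xd yd q : ℝ) : ℝ :=
  m * (κ * rhoSqOrigin κ x y / 2 - 1) * q
      / (Real.sqrt (rhoSqOrigin κ x y) ^ 3 * (1 - κ * rhoSqOrigin κ x y / 4) ^ ((3 : ℝ) / 2))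
    - κ * (xd ^ 2 + yd ^ 2 + κ * Bterm κ x y xd yd) * q

section Circle

variable (r α φ : ℝ)

theorem hasDerivAt_mul_cos_affine (t : ℝ) :
    HasDerivAt (fun t => r * cos (α * t + φ)) (-α * (r * sin (α * t + φ))) t := by
  have h := ((((hasDerivAt_id t).const_mul α).add_const φ).cos).const_mul r
  exact h.congr_deriv (by simp only [id, mul_one]; ring)

theorem hasDerivAt_mul_sin_affine (t : ℝ) :
    HasDerivAt (fun t => r * sin (α * t + φ)) (α * (r * cos (α * t + φ))) t := by
  have h := ((((hasDerivAt_id t).const_mul α).add_const φ).sin).const_mul r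
  exact h.congr_deriv (by simp only [id, mul_one]; ring)

theorem deriv_mul_cos_affine :
    deriv (fun t => r * cos (α * t + φ)) = fun t => -α * (r * sin (α * t + φ)) :=
  funext fun t => (hasDerivAt_mul_cos_affine r α φ t).deriv

theorem deriv_mul_sin_affine :
    deriv (fun t => r * sin (α * t + φ)) = fun t => α * (r * cos (α * t + φ)) :=
  funext fun t => (hasDerivAt_mul_sin_affine r α φ t).deriv

theorem deriv_deriv_mul_cos_affine (t : ℝ) :
    deriv (deriv fun t => r * cos (α * t + φ)) t = -α ^ 2 * (r * cos (α * t + φ)) := by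
  rw [deriv_mul_cos_affine, ((hasDerivAt_mul_sin_affine r α φ t).const_mul (-α)).deriv]
  ring

theorem deriv_deriv_mul_sin_affine (t : ℝ) :
    deriv (deriv fun t => r * sin (α * t + φ)) t = -α ^ 2 * (r * sin (α * t + φ)) := by
  rw [deriv_mul_sin_affine, ((hasDerivAt_mul_cos_affine r α φ t).const_mul α).deriv]
  ring

end Circle

section ChordDistance

variable {κ x y : ℝ}

theorem rhoSqOrigin_eq (h : κ * (x ^ 2 + y ^ 2) ≤ 1) :
    rhoSqOrigin κ x y = 2 * (x ^ 2 + y ^ 2) / (1 + √(1 - κ * (x ^ 2 + y ^ 2))) := by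
  have hs := sq_sqrt (sub_nonneg.mpr h)
  have hpos : 0 < 1 + √(1 - κ * (x ^ 2 + y ^ 2)) := by positivity
  rw [rhoSqOrigin]
  generalize √(1 - κ * (x ^ 2 + y ^ 2)) = s at hs hpos ⊢
  field_simp
  linear_combination (x ^ 2 + y ^ 2) * hs

theorem one_sub_mul_rhoSqOrigin_div_four (h : κ * (x ^ 2 + y ^ 2) ≤ 1) :
    1 - κ * rhoSqOrigin κ x y / 4 = (1 + √(1 - κ * (x ^ 2 + y ^ 2))) / 2 := by
  have hs := sq_sqrt (sub_nonneg.mpr h)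
  have hpos : 0 < 1 + √(1 - κ * (x ^ 2 + y ^ 2)) := by positivity
  rw [rhoSqOrigin_eq h]
  generalize √(1 - κ * (x ^ 2 + y ^ 2)) = s at hs hpos ⊢
  field_simp
  linear_combination -4 * hs

theorem mul_rhoSqOrigin_div_two_sub_one (h : κ * (x ^ 2 + y ^ 2) ≤ 1) :
    κ * rhoSqOrigin κ x y / 2 - 1 = -√(1 - κ * (x ^ 2 + y ^ 2)) := by
  have hs := sq_sqrt (sub_nonneg.mpr h)
  have hpos : 0 < 1 + √(1 - κ * (x ^ 2 + y ^ 2)) := by positivity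
  rw [rhoSqOrigin_eq h]
  generalize √(1 - κ * (x ^ 2 + y ^ 2)) = s at hs hpos ⊢
  field_simp
  linear_combination hs

theorem rhoSqOrigin_mul_one_sub (h : κ * (x ^ 2 + y ^ 2) ≤ 1) :
    rhoSqOrigin κ x y * (1 - κ * rhoSqOrigin κ x y / 4) = x ^ 2 + y ^ 2 := by
  have hpos : 0 < 1 + √(1 - κ * (x ^ 2 + y ^ 2)) := by positivity
  rw [one_sub_mul_rhoSqOrigin_div_four h, rhoSqOrigin_eq h]
  field_simp

theorem sqrt_pow_three_mul_rpow_three_halves {a b : ℝ} (ha : 0 ≤ a) (hb : 0 ≤ b) :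
    √a ^ 3 * b ^ ((3 : ℝ) / 2) = √(a * b) ^ 3 := by
  have hb' : b ^ ((3 : ℝ) / 2) = √b ^ 3 := by
    rw [sqrt_eq_rpow, ← rpow_natCast, ← rpow_mul hb]
    norm_num
  rw [hb', sqrt_mul ha, mul_pow]

theorem sqrt_rhoSqOrigin_pow_three_mul (h : κ * (x ^ 2 + y ^ 2) ≤ 1) :
    √(rhoSqOrigin κ x y) ^ 3 * (1 - κ * rhoSqOrigin κ x y / 4) ^ ((3 : ℝ) / 2)
      = √(x ^ 2 + y ^ 2) ^ 3 := by
  have hρ : 0 ≤ rhoSqOrigin κ x y := by rw [rhoSqOrigin_eq h]; positivity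
  have hb : 0 ≤ 1 - κ * rhoSqOrigin κ x y / 4 := by
    rw [one_sub_mul_rhoSqOrigin_div_four h]; positivity
  rw [sqrt_pow_three_mul_rpow_three_halves hρ hb, rhoSqOrigin_mul_one_sub h]

end ChordDistance

theorem Bterm_of_orthogonal {κ x y xd yd : ℝ} (h : x * xd + y * yd = 0) :
    Bterm κ x y xd yd = 0 := by
  simp [Bterm, h]

theorem planetaryAccel_eq_centripetal {κ m r α x y xd yd : ℝ} (hr : 0 < r)
    (hκr : κ * r ^ 2 ≤ 1) (hαm : α ^ 2 * r ^ 3 * √(1 - κ * r ^ 2) = m)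
    (hxy : x ^ 2 + y ^ 2 = r ^ 2) (hvel : x * xd + y * yd = 0)
    (hspeed : xd ^ 2 + yd ^ 2 = α ^ 2 * r ^ 2) (q : ℝ) :
    planetaryAccel κ m x y xd yd q = -α ^ 2 * q := by
  have h : κ * (x ^ 2 + y ^ 2) ≤ 1 := hxy ▸ hκr
  have hs := sq_sqrt (sub_nonneg.mpr hκr)
  rw [planetaryAccel, mul_rhoSqOrigin_div_two_sub_one h, sqrt_rhoSqOrigin_pow_three_mul h,
    Bterm_of_orthogonal hvel, hspeed, hxy, sqrt_sq hr.le, ← hαm]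
  generalize √(1 - κ * r ^ 2) = s at hs ⊢
  field_simp
  linear_combination -α ^ 2 * q * hs

theorem deriv_deriv_eq_planetaryAccel_of_circular {κ m r α : ℝ} (hr : 0 < r)
    (hκr : κ * r ^ 2 ≤ 1) (hαm : α ^ 2 * r ^ 3 * √(1 - κ * r ^ 2) = m) (φ t : ℝ) :
    let x := fun t => r * cos (α * t + φ)
    let y := fun t => r * sin (α * t + φ)
    deriv (deriv x) t = planetaryAccel κ m (x t) (y t) (deriv x t) (deriv y t) (x t) ∧
      deriv (deriv y) t = planetaryAccel κ m (x t) (y t) (deriv x t) (deriv y t) (y t) := by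
  intro x y
  have hxy : (r * cos (α * t + φ)) ^ 2 + (r * sin (α * t + φ)) ^ 2 = r ^ 2 := by
    linear_combination r ^ 2 * cos_sq_add_sin_sq (α * t + φ)
  have hcentripetal := planetaryAccel_eq_centripetal hr hκr hαm hxy
    (xd := -α * (r * sin (α * t + φ))) (yd := α * (r * cos (α * t + φ))) (by ring)
    (by linear_combination α ^ 2 * hxy)
  refine ⟨(deriv_deriv_mul_cos_affine r α φ t).trans ?_,
    (deriv_deriv_mul_sin_affine r α φ t).trans ?_⟩ <;>
  simp only [x, y, deriv_mul_cos_affine, deriv_mul_sin_affine, hcentripetal]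

theorem kepler_third_law {κ m r α : ℝ} (hr : 0 < r) (hκr : κ * r ^ 2 < 1)
    (hα : α ^ 2 = m * (1 - κ * r ^ 2 + √(1 - κ * r ^ 2))
        / (r ^ 3 * (1 - κ * r ^ 2) * (1 + √(1 - κ * r ^ 2)))) :
    α ^ 2 * r ^ 3 * √(1 - κ * r ^ 2) = m := by
  have hs : 0 < √(1 - κ * r ^ 2) := sqrt_pos.mpr (by linarith)
  have hs2 := sq_sqrt (sub_nonneg.mpr hκr.le)
  rw [hα]
  generalize √(1 - κ * r ^ 2) = s at hs hs2 ⊢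
  rw [← hs2]
  field_simp
  ring

theorem planetary_lagrangian_solution_general (κ m r θ α : ℝ)
    (hr : 0 < r) (hκr : κ * r ^ 2 < 1)
    (hα : α ^ 2 = m * (1 - κ * r ^ 2 + Real.sqrt (1 - κ * r ^ 2))
        / (r ^ 3 * (1 - κ * r ^ 2) * (1 + Real.sqrt (1 - κ * r ^ 2))))
    (x₂ y₂ x₃ y₃ : ℝ → ℝ)
    (hx₂ : x₂ = fun t => r * Real.cos (α * t))
    (hy₂ : y₂ = fun t => r * Real.sin (α * t))
    (hx₃ : x₃ = fun t => r * Real.cos (α * t + θ))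
    (hy₃ : y₃ = fun t => r * Real.sin (α * t + θ)) :
    ∀ t : ℝ,
      deriv (deriv x₂) t
          = m * (κ * rhoSqOrigin κ (x₂ t) (y₂ t) / 2 - 1) * x₂ t
              / (Real.sqrt (rhoSqOrigin κ (x₂ t) (y₂ t)) ^ 3
                * (1 - κ * rhoSqOrigin κ (x₂ t) (y₂ t) / 4) ^ ((3 : ℝ) / 2))
            - κ * ((deriv x₂ t) ^ 2 + (deriv y₂ t) ^ 2
                + κ * Bterm κ (x₂ t) (y₂ t) (deriv x₂ t) (deriv y₂ t)) * x₂ t ∧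
      deriv (deriv y₂) t
          = m * (κ * rhoSqOrigin κ (x₂ t) (y₂ t) / 2 - 1) * y₂ t
              / (Real.sqrt (rhoSqOrigin κ (x₂ t) (y₂ t)) ^ 3
                * (1 - κ * rhoSqOrigin κ (x₂ t) (y₂ t) / 4) ^ ((3 : ℝ) / 2))
            - κ * ((deriv x₂ t) ^ 2 + (deriv y₂ t) ^ 2
                + κ * Bterm κ (x₂ t) (y₂ t) (deriv x₂ t) (deriv y₂ t)) * y₂ t ∧
      deriv (deriv x₃) t
          = m * (κ * rhoSqOrigin κ (x₃ t) (y₃ t) / 2 - 1) * x₃ t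
              / (Real.sqrt (rhoSqOrigin κ (x₃ t) (y₃ t)) ^ 3
                * (1 - κ * rhoSqOrigin κ (x₃ t) (y₃ t) / 4) ^ ((3 : ℝ) / 2))
            - κ * ((deriv x₃ t) ^ 2 + (deriv y₃ t) ^ 2
                + κ * Bterm κ (x₃ t) (y₃ t) (deriv x₃ t) (deriv y₃ t)) * x₃ t ∧
      deriv (deriv y₃) t
          = m * (κ * rhoSqOrigin κ (x₃ t) (y₃ t) / 2 - 1) * y₃ t
              / (Real.sqrt (rhoSqOrigin κ (x₃ t) (y₃ t)) ^ 3
                * (1 - κ * rhoSqOrigin κ (x₃ t) (y₃ t) / 4) ^ ((3 : ℝ) / 2))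
            - κ * ((deriv x₃ t) ^ 2 + (deriv y₃ t) ^ 2
                + κ * Bterm κ (x₃ t) (y₃ t) (deriv x₃ t) (deriv y₃ t)) * y₃ t := by
  subst hx₂ hy₂ hx₃ hy₃
  have hαm := kepler_third_law hr hκr hα
  intro t
  obtain ⟨hx₂, hy₂⟩ := deriv_deriv_eq_planetaryAccel_of_circular hr hκr.le hαm 0 t
  obtain ⟨hx₃, hy₃⟩ := deriv_deriv_eq_planetaryAccel_of_circular hr hκr.le hαm θ t
  simp only [add_zero] at hx₂ hy₂
  exact ⟨hx₂, hy₂, hx₃, hy₃⟩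

/-- Theorem 5 of the paper: in the planetary case (`m₁ = m` at the origin,
`m₂ = m₃ = 0`), the uniformly rotating equilateral configuration solves the
equations of motion (36) for every curvature `κ`. -/
theorem planetary_lagrangian_solution (κ m r θ α : ℝ)
    (hm : 0 < m) (hr : 0 < r) (hκr : κ * r ^ 2 < 1)
    (hθ₁ : 0 < θ) (hθ₂ : θ < Real.pi / 2)
    (hθ : Real.cos θ = Real.sqrt (1 - κ * r ^ 2) / (1 + Real.sqrt (1 - κ * r ^ 2)))
    (hα : α ^ 2 = m * (1 - κ * r ^ 2 + Real.sqrt (1 - κ * r ^ 2))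
        / (r ^ 3 * (1 - κ * r ^ 2) * (1 + Real.sqrt (1 - κ * r ^ 2))))
    (x₂ y₂ x₃ y₃ : ℝ → ℝ)
    (hx₂ : x₂ = fun t => r * Real.cos (α * t))
    (hy₂ : y₂ = fun t => r * Real.sin (α * t))
    (hx₃ : x₃ = fun t => r * Real.cos (α * t + θ))
    (hy₃ : y₃ = fun t => r * Real.sin (α * t + θ)) :
    ∀ t : ℝ,
      deriv (deriv x₂) t
          = m * (κ * rhoSqOrigin κ (x₂ t) (y₂ t) / 2 - 1) * x₂ t
              / (Real.sqrt (rhoSqOrigin κ (x₂ t) (y₂ t)) ^ 3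
                * (1 - κ * rhoSqOrigin κ (x₂ t) (y₂ t) / 4) ^ ((3 : ℝ) / 2))
            - κ * ((deriv x₂ t) ^ 2 + (deriv y₂ t) ^ 2
                + κ * Bterm κ (x₂ t) (y₂ t) (deriv x₂ t) (deriv y₂ t)) * x₂ t ∧
      deriv (deriv y₂) t
          = m * (κ * rhoSqOrigin κ (x₂ t) (y₂ t) / 2 - 1) * y₂ t
              / (Real.sqrt (rhoSqOrigin κ (x₂ t) (y₂ t)) ^ 3
                * (1 - κ * rhoSqOrigin κ (x₂ t) (y₂ t) / 4) ^ ((3 : ℝ) / 2))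
            - κ * ((deriv x₂ t) ^ 2 + (deriv y₂ t) ^ 2
                + κ * Bterm κ (x₂ t) (y₂ t) (deriv x₂ t) (deriv y₂ t)) * y₂ t ∧
      deriv (deriv x₃) t
          = m * (κ * rhoSqOrigin κ (x₃ t) (y₃ t) / 2 - 1) * x₃ t
              / (Real.sqrt (rhoSqOrigin κ (x₃ t) (y₃ t)) ^ 3
                * (1 - κ * rhoSqOrigin κ (x₃ t) (y₃ t) / 4) ^ ((3 : ℝ) / 2))
            - κ * ((deriv x₃ t) ^ 2 + (deriv y₃ t) ^ 2
                + κ * Bterm κ (x₃ t) (y₃ t) (deriv x₃ t) (deriv y₃ t)) * x₃ t ∧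
      deriv (deriv y₃) t
          = m * (κ * rhoSqOrigin κ (x₃ t) (y₃ t) / 2 - 1) * y₃ t
              / (Real.sqrt (rhoSqOrigin κ (x₃ t) (y₃ t)) ^ 3
                * (1 - κ * rhoSqOrigin κ (x₃ t) (y₃ t) / 4) ^ ((3 : ℝ) / 2))
            - κ * ((deriv x₃ t) ^ 2 + (deriv y₃ t) ^ 2
                + κ * Bterm κ (x₃ t) (y₃ t) (deriv x₃ t) (deriv y₃ t)) * y₃ t :=
  planetary_lagrangian_solution_general κ m r θ α hr hκr hα x₂ y₂ x₃ y₃ hx₂ hy₂ hx₃ hy₃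
end

section
/- Let κ > 0, m > 0, r > 0, r₃ > 0 with κr² < 1 and κr₃² ≤ 1, let α ∈ ℝ, and set ρ = 2r. Suppose that (E1) 3r² = r₃² + κ(r² − r₃²)²/((√(1 − κr²) + √(1 − κr₃²))²), (E2) α²(1 − κr²) = m(2 − κρ²/2)/(ρ³(1 − κρ²/4)^{3/2}), and (E3) α²(1 − κr₃²) = 2m(1 − κρ²/2)/(ρ³(1 − κρ²/4)^{3/2}). Then r = (2κ)^{-1/2}, r₃ = κ^{-1/2}, and α² = 2mκ^{3/2}. -/
open Real

private lemma rpow_neg_half_sq (c : ℝ) (hc : 0 < c) :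
    (c ^ (-(1:ℝ)/2)) ^ 2 = c⁻¹ := by
  rw [← Real.rpow_natCast (c ^ (-(1:ℝ)/2)) 2, ← Real.rpow_mul hc.le]
  norm_num [Real.rpow_neg_one]

private lemma rpow_neg_half_cube (c : ℝ) (hc : 0 < c) :
    (c ^ (-(1:ℝ)/2)) ^ 3 = c ^ (-(3:ℝ)/2) := by
  rw [← Real.rpow_natCast (c ^ (-(1:ℝ)/2)) 3, ← Real.rpow_mul hc.le]
  norm_num

private lemma half_rpow_32 : ((1:ℝ)/2) ^ ((3:ℝ)/2) = (2:ℝ) ^ (-(3:ℝ)/2) := by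
  rw [one_div, ← Real.rpow_neg_one (2:ℝ), ← Real.rpow_mul (by norm_num : (0:ℝ) ≤ 2)]
  norm_num

/-- Theorem 6 of the paper: for two equal masses diametrically opposed on a circle
of radius `r` of `S²_κ` forming a rotating equilateral triangle with a negligible
mass on a circle of radius `r₃`, necessarily `r = (2κ)^{-1/2}`, `r₃ = κ^{-1/2}`
(the equator), and `α² = 2mκ^{3/2}`. -/
theorem sphere_two_equal_one_negligible (κ m r r₃ α ρ : ℝ)
    (hκ : 0 < κ) (hm : 0 < m) (hr : 0 < r) (hr₃ : 0 < r₃)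
    (h₁ : κ * r ^ 2 < 1) (h₂ : κ * r₃ ^ 2 ≤ 1) (hρ : ρ = 2 * r)
    (E1 : 3 * r ^ 2 = r₃ ^ 2 + κ * (r ^ 2 - r₃ ^ 2) ^ 2
        / (Real.sqrt (1 - κ * r ^ 2) + Real.sqrt (1 - κ * r₃ ^ 2)) ^ 2)
    (E2 : α ^ 2 * (1 - κ * r ^ 2)
        = m * (2 - κ * ρ ^ 2 / 2) / (ρ ^ 3 * (1 - κ * ρ ^ 2 / 4) ^ ((3 : ℝ) / 2)))
    (E3 : α ^ 2 * (1 - κ * r₃ ^ 2)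
        = 2 * m * (1 - κ * ρ ^ 2 / 2) / (ρ ^ 3 * (1 - κ * ρ ^ 2 / 4) ^ ((3 : ℝ) / 2))) :
    r = (2 * κ) ^ (-(1 : ℝ) / 2) ∧ r₃ = κ ^ (-(1 : ℝ) / 2) ∧
      α ^ 2 = 2 * m * κ ^ ((3 : ℝ) / 2) := by
  set_option maxHeartbeats 1000000 in
  have hρpos : 0 < ρ := by rw [hρ]; linarith
  have hbase : 1 - κ * ρ ^ 2 / 4 = 1 - κ * r ^ 2 := by rw [hρ]; ring
  have hbpos : 0 < 1 - κ * ρ ^ 2 / 4 := by rw [hbase]; linarith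
  set D := ρ ^ 3 * (1 - κ * ρ ^ 2 / 4) ^ ((3 : ℝ) / 2) with hDdef
  have hDpos : 0 < D := by
    have := Real.rpow_pos_of_pos hbpos ((3 : ℝ) / 2)
    positivity
  rw [eq_div_iff hDpos.ne'] at E2 E3
  have h1s : (1 : ℝ) - κ * r ^ 2 ≠ 0 := by linarith
  -- α² D = 2m
  have hαD : α ^ 2 * D = 2 * m := by
    have hcs : 2 - κ * ρ ^ 2 / 2 = 2 * (1 - κ * r ^ 2) := by rw [hρ]; ring
    rw [hcs] at E2
    have h' : α ^ 2 * D * (1 - κ * r ^ 2) = 2 * m * (1 - κ * r ^ 2) := by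
      linear_combination E2
    exact mul_right_cancel₀ h1s h'
  -- κ r₃² = 2 κ r²
  have ht2 : κ * r₃ ^ 2 = 2 * (κ * r ^ 2) := by
    have hcs : 1 - κ * ρ ^ 2 / 2 = 1 - 2 * (κ * r ^ 2) := by rw [hρ]; ring
    rw [hcs] at E3
    have h' : (2 * m) * (κ * r₃ ^ 2) = (2 * m) * (2 * (κ * r ^ 2)) := by
      linear_combination (1 - κ * r₃ ^ 2) * hαD - E3
    exact mul_left_cancel₀ (by positivity) h'
  -- sqrt facts
  set a := Real.sqrt (1 - κ * r ^ 2) with hadef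
  set b := Real.sqrt (1 - κ * r₃ ^ 2) with hbdef
  have ha2 : a ^ 2 = 1 - κ * r ^ 2 := Real.sq_sqrt (by linarith)
  have hb2 : b ^ 2 = 1 - κ * r₃ ^ 2 := Real.sq_sqrt (by linarith)
  have hapos : 0 < a := Real.sqrt_pos.2 (by linarith)
  have hbnn : 0 ≤ b := Real.sqrt_nonneg _
  have habpos : (0:ℝ) < (a + b) ^ 2 := by positivity
  -- clear the denominator in E1
  have E1' : κ * (r ^ 2 - r₃ ^ 2) ^ 2 = (3 * r ^ 2 - r₃ ^ 2) * (a + b) ^ 2 := by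
    have h' : κ * (r ^ 2 - r₃ ^ 2) ^ 2 / (a + b) ^ 2 = 3 * r ^ 2 - r₃ ^ 2 := by
      linarith
    exact (div_eq_iff habpos.ne').mp h'
  have hr32 : r₃ ^ 2 = 2 * r ^ 2 := by
    have h' : κ * r₃ ^ 2 = κ * (2 * r ^ 2) := by linear_combination ht2
    exact mul_left_cancel₀ hκ.ne' h'
  have hab2 : (a + b) ^ 2 = κ * r ^ 2 := by
    have hr2ne : (r : ℝ) ^ 2 ≠ 0 := by positivity
    apply mul_left_cancel₀ hr2ne
    rw [hr32] at E1'
    linear_combination -E1'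
  -- deduce κ r² = 1/2
  have hexp : a ^ 2 + 2 * (a * b) + b ^ 2 = κ * r ^ 2 := by linear_combination hab2
  have habnn : 0 ≤ a * b := mul_nonneg hapos.le hbnn
  have hbsq : 0 ≤ b ^ 2 := sq_nonneg b
  have hs : κ * r ^ 2 = 1 / 2 := by linarith [ha2, hb2, ht2]
  have ht1 : κ * r₃ ^ 2 = 1 := by linarith
  -- conclusions
  have h2κ : (0:ℝ) < 2 * κ := by linarith
  have hxpos : 0 < (2 * κ) ^ (-(1:ℝ)/2) := Real.rpow_pos_of_pos h2κ _
  have hx2 : ((2 * κ) ^ (-(1:ℝ)/2)) ^ 2 = (2 * κ)⁻¹ := rpow_neg_half_sq _ h2κ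
  have hrx : r = (2 * κ) ^ (-(1:ℝ)/2) := by
    have hr2 : r ^ 2 = (2 * κ)⁻¹ := by
      rw [inv_eq_one_div, eq_div_iff h2κ.ne']
      linear_combination 2 * hs
    have hzero : (r - (2 * κ) ^ (-(1:ℝ)/2)) * (r + (2 * κ) ^ (-(1:ℝ)/2)) = 0 := by
      linear_combination hr2 - hx2
    rcases mul_eq_zero.mp hzero with h | h
    · linarith
    · linarith [hxpos]
  have hypos : 0 < κ ^ (-(1:ℝ)/2) := Real.rpow_pos_of_pos hκ _
  have hy2 : (κ ^ (-(1:ℝ)/2)) ^ 2 = κ⁻¹ := rpow_neg_half_sq _ hκ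
  have hr₃x : r₃ = κ ^ (-(1:ℝ)/2) := by
    have hr₃2 : r₃ ^ 2 = κ⁻¹ := by
      rw [inv_eq_one_div, eq_div_iff hκ.ne']
      linear_combination ht1
    have hzero : (r₃ - κ ^ (-(1:ℝ)/2)) * (r₃ + κ ^ (-(1:ℝ)/2)) = 0 := by
      linear_combination hr₃2 - hy2
    rcases mul_eq_zero.mp hzero with h | h
    · linarith
    · linarith [hypos]
  refine ⟨hrx, hr₃x, ?_⟩
  -- compute D = κ^{-3/2}
  have hhalf : 1 - κ * ρ ^ 2 / 4 = 1 / 2 := by rw [hbase]; linarith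
  have hDval : D = κ ^ (-(3:ℝ)/2) := by
    rw [hDdef, hhalf, hρ, hrx, half_rpow_32]
    have h1 : (2 * ((2*κ) ^ (-(1:ℝ)/2))) ^ 3 = 8 * ((2*κ) ^ (-(1:ℝ)/2)) ^ 3 := by ring
    rw [h1, rpow_neg_half_cube _ h2κ,
      Real.mul_rpow (by norm_num : (0:ℝ) ≤ 2) hκ.le]
    have h2 : (8:ℝ) * ((2:ℝ) ^ (-(3:ℝ)/2) * κ ^ (-(3:ℝ)/2)) * (2:ℝ) ^ (-(3:ℝ)/2)
        = 8 * ((2:ℝ) ^ (-(3:ℝ)/2) * (2:ℝ) ^ (-(3:ℝ)/2)) * κ ^ (-(3:ℝ)/2) := by ring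
    rw [h2, ← Real.rpow_add (by norm_num : (0:ℝ) < 2)]
    norm_num
  have hcancel : κ ^ (-(3:ℝ)/2) * κ ^ ((3:ℝ)/2) = 1 := by
    rw [← Real.rpow_add hκ]
    norm_num
  calc α ^ 2 = α ^ 2 * (κ ^ (-(3:ℝ)/2) * κ ^ ((3:ℝ)/2)) := by rw [hcancel, mul_one]
    _ = (α ^ 2 * D) * κ ^ ((3:ℝ)/2) := by rw [hDval]; ring
    _ = 2 * m * κ ^ ((3:ℝ)/2) := by rw [hαD]
end

section
/- There do not exist κ < 0, m > 0, r > 0, r₃ > 0, and α ∈ ℝ such that, with ρ = 2r, the three equations hold: (E1) 3r² = r₃² + κ(r² − r₃²)²/((√(1 − κr²) + √(1 − κr₃²))²), (E2) α²(1 − κr²) = m(2 − κρ²/2)/(ρ³(1 − κρ²/4)^{3/2}), and (E3) α²(1 − κr₃²) = 2m(1 − κρ²/2)/(ρ³(1 − κρ²/4)^{3/2}). -/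
open Real

/-- Theorem 7 of the paper: there are no Lagrangian relative equilibria in `H²_κ`
with two bodies of equal mass and a third body of negligible mass. -/
theorem no_hyperbolic_two_equal_one_negligible :
    ¬ ∃ (κ m r r₃ α ρ : ℝ), κ < 0 ∧ 0 < m ∧ 0 < r ∧ 0 < r₃ ∧ ρ = 2 * r ∧
      3 * r ^ 2 = r₃ ^ 2 + κ * (r ^ 2 - r₃ ^ 2) ^ 2
        / (Real.sqrt (1 - κ * r ^ 2) + Real.sqrt (1 - κ * r₃ ^ 2)) ^ 2 ∧
      α ^ 2 * (1 - κ * r ^ 2)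
        = m * (2 - κ * ρ ^ 2 / 2) / (ρ ^ 3 * (1 - κ * ρ ^ 2 / 4) ^ ((3 : ℝ) / 2)) ∧
      α ^ 2 * (1 - κ * r₃ ^ 2)
        = 2 * m * (1 - κ * ρ ^ 2 / 2) / (ρ ^ 3 * (1 - κ * ρ ^ 2 / 4) ^ ((3 : ℝ) / 2)) := by
  rintro ⟨κ, m, r, r₃, α, ρ, hκ, hm, hr, hr₃, hρ, hE1, hE2, hE3⟩
  have hr2 : 0 < r ^ 2 := pow_pos hr 2
  have h1r : 0 < 1 - κ * r ^ 2 := by nlinarith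
  have h1r₃ : 0 < 1 - κ * r₃ ^ 2 := by nlinarith [pow_pos hr₃ 2]
  have hρpos : 0 < ρ := by rw [hρ]; linarith
  -- the base of the rpow
  have hbase : 1 - κ * ρ ^ 2 / 4 = 1 - κ * r ^ 2 := by rw [hρ]; ring
  set D : ℝ := ρ ^ 3 * (1 - κ * ρ ^ 2 / 4) ^ ((3 : ℝ) / 2) with hD
  have hDpos : 0 < D := by
    apply mul_pos (pow_pos hρpos 3)
    exact Real.rpow_pos_of_pos (by rw [hbase]; exact h1r) _
  -- E2 gives α² = 2m/D
  have h2 : 2 - κ * ρ ^ 2 / 2 = 2 * (1 - κ * r ^ 2) := by rw [hρ]; ring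
  have hα : α ^ 2 = 2 * m / D := by
    have h' : α ^ 2 * (1 - κ * r ^ 2) = (2 * m / D) * (1 - κ * r ^ 2) := by
      rw [hE2, h2]; ring
    exact mul_right_cancel₀ (ne_of_gt h1r) h'
  -- E3 then gives r₃² = 2r²
  have h3 : 1 - κ * ρ ^ 2 / 2 = 1 - 2 * (κ * r ^ 2) := by rw [hρ]; ring
  have key : r₃ ^ 2 = 2 * r ^ 2 := by
    rw [hα, h3] at hE3
    have hDne : D ≠ 0 := ne_of_gt hDpos
    have hmne : m ≠ 0 := ne_of_gt hm
    have : κ * r₃ ^ 2 = κ * (2 * r ^ 2) := by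
      field_simp at hE3
      nlinarith [hE3]
    exact mul_left_cancel₀ (ne_of_lt hκ) this
  -- E1 now gives a contradiction
  rw [key] at hE1
  set S : ℝ := Real.sqrt (1 - κ * r ^ 2) + Real.sqrt (1 - κ * (2 * r ^ 2)) with hS
  have hSpos : 0 < S := by
    have h1 : 0 < Real.sqrt (1 - κ * r ^ 2) := Real.sqrt_pos.mpr h1r
    have h2 : 0 ≤ Real.sqrt (1 - κ * (2 * r ^ 2)) := Real.sqrt_nonneg _
    positivity
  have hnum : κ * (r ^ 2 - 2 * r ^ 2) ^ 2 < 0 := by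
    have : (r ^ 2 - 2 * r ^ 2) ^ 2 > 0 :=
      pow_two_pos_of_ne_zero (by nlinarith)
    exact mul_neg_of_neg_of_pos hκ this
  have hdiv : κ * (r ^ 2 - 2 * r ^ 2) ^ 2 / S ^ 2 < 0 :=
    div_neg_of_neg_of_pos hnum (pow_pos hSpos 2)
  linarith
end

section
/- Let κ ≠ 0, m > 0, r₁, r₂ > 0 with 1 − κr₁² ≠ 0 and 1 − κr₂² ≠ 0, set M = m·r₂/r₁, and let ρ ∈ ℝ. Then m(r₁ + r₂ − κρ²r₁/2)/(r₁(1 − κr₁²)) = M(r₁ + r₂ − κρ²r₂/2)/(r₂(1 − κr₂²)) if and only if (r₁ − r₂)·(ρ²(1 + κr₁r₂)/2 − (r₁ + r₂)²) = 0. -/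
/-! Once `M = m r₂ / r₁` is substituted, both sides carry the factor `m / r₁`, and cross-multiplying
the remaining denominators `1 - κ rᵢ²` leaves a polynomial identity: the difference of the
cross-multiplied numerators is `-κ` times the factored form. -/

theorem compatibility_numerator_sub (κ r₁ r₂ ρ : ℝ) :
    (r₁ + r₂ - κ * ρ ^ 2 * r₁ / 2) * (1 - κ * r₂ ^ 2)
        - (r₁ + r₂ - κ * ρ ^ 2 * r₂ / 2) * (1 - κ * r₁ ^ 2)
      = -κ * ((r₁ - r₂) * (ρ ^ 2 * (1 + κ * r₁ * r₂) / 2 - (r₁ + r₂) ^ 2)) := by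
  ring

/-- Equivalence between the compatibility condition (46) of the paper and its
factored form (48), given `M r₁ = m r₂`. -/
theorem compatibility_factorization (κ m r₁ r₂ ρ M : ℝ)
    (hκ : κ ≠ 0) (hm : 0 < m) (hr₁ : 0 < r₁) (hr₂ : 0 < r₂)
    (h₁ : 1 - κ * r₁ ^ 2 ≠ 0) (h₂ : 1 - κ * r₂ ^ 2 ≠ 0)
    (hM : M = m * r₂ / r₁) :
    m * (r₁ + r₂ - κ * ρ ^ 2 * r₁ / 2) / (r₁ * (1 - κ * r₁ ^ 2))
        = M * (r₁ + r₂ - κ * ρ ^ 2 * r₂ / 2) / (r₂ * (1 - κ * r₂ ^ 2))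
      ↔ (r₁ - r₂) * (ρ ^ 2 * (1 + κ * r₁ * r₂) / 2 - (r₁ + r₂) ^ 2) = 0 := by
  subst hM
  have hrhs : m * r₂ / r₁ * (r₁ + r₂ - κ * ρ ^ 2 * r₂ / 2) / (r₂ * (1 - κ * r₂ ^ 2))
      = m * (r₁ + r₂ - κ * ρ ^ 2 * r₂ / 2) / (r₁ * (1 - κ * r₂ ^ 2)) := by
    field_simp
  rw [hrhs, div_eq_div_iff (mul_ne_zero hr₁.ne' h₁) (mul_ne_zero hr₁.ne' h₂), ← sub_eq_zero]
  have hcross : m * (r₁ + r₂ - κ * ρ ^ 2 * r₁ / 2) * (r₁ * (1 - κ * r₂ ^ 2))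
        - m * (r₁ + r₂ - κ * ρ ^ 2 * r₂ / 2) * (r₁ * (1 - κ * r₁ ^ 2))
      = -κ * (m * r₁) * ((r₁ - r₂) * (ρ ^ 2 * (1 + κ * r₁ * r₂) / 2 - (r₁ + r₂) ^ 2)) := by
    linear_combination (m * r₁) * compatibility_numerator_sub κ r₁ r₂ ρ
  rw [hcross, mul_eq_zero, or_iff_right (by simp [hκ, hm.ne', hr₁.ne'])]
end

section
/- Let κ < 0, μ ≥ 1, and r > 0, and define D = (√(1 − κr²) + √(1 − κμ²r²))² and ρ² = (1 + μ)²r² + κ(μ − 1)²r⁴/D. Then ρ² > 0 and ρ²(1 + κμr²)/2 − (1 + μ)²r² < 0. -/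
open Real

/-- Key inequality for Theorem 8(i): in `H²_κ` (κ < 0), the second factor of the
compatibility condition is strictly negative. -/
theorem hyperbolic_second_factor_negative (κ μ r D ρsq : ℝ)
    (hκ : κ < 0) (hμ : 1 ≤ μ) (hr : 0 < r)
    (hD : D = (Real.sqrt (1 - κ * r ^ 2) + Real.sqrt (1 - κ * μ ^ 2 * r ^ 2)) ^ 2)
    (hρ : ρsq = (1 + μ) ^ 2 * r ^ 2 + κ * (μ - 1) ^ 2 * r ^ 4 / D) :
    0 < ρsq ∧ ρsq * (1 + κ * μ * r ^ 2) / 2 - (1 + μ) ^ 2 * r ^ 2 < 0 := by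
  have hμ0 : (0:ℝ) < μ := lt_of_lt_of_le one_pos hμ
  have hr2 : (0:ℝ) < r ^ 2 := by positivity
  have hneg : (0:ℝ) < -κ := by linarith
  have hprod : (0:ℝ) < -κ * (μ ^ 2 * r ^ 2) := by positivity
  have h2 : (0:ℝ) ≤ 1 - κ * μ ^ 2 * r ^ 2 := by nlinarith
  have ha : 0 ≤ Real.sqrt (1 - κ * r ^ 2) := Real.sqrt_nonneg _
  have hb : 0 ≤ Real.sqrt (1 - κ * μ ^ 2 * r ^ 2) := Real.sqrt_nonneg _
  have hb2 : (Real.sqrt (1 - κ * μ ^ 2 * r ^ 2)) ^ 2 = 1 - κ * μ ^ 2 * r ^ 2 :=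
    Real.sq_sqrt h2
  have hDge : 1 - κ * μ ^ 2 * r ^ 2 ≤ D := by
    rw [hD]
    nlinarith [sq_nonneg (Real.sqrt (1 - κ * r ^ 2)), mul_nonneg ha hb]
  have hDpos : 0 < D := by nlinarith
  have hfac : (0:ℝ) ≤ μ ^ 2 * (1 + μ) ^ 2 - (μ - 1) ^ 2 := by nlinarith
  have hkey : -(1 + μ) ^ 2 * r ^ 2 < κ * (μ - 1) ^ 2 * r ^ 4 / D := by
    rw [lt_div_iff₀ hDpos]
    have h3 : (1 + μ) ^ 2 * r ^ 2 * (1 - κ * μ ^ 2 * r ^ 2) ≤ (1 + μ) ^ 2 * r ^ 2 * D :=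
      mul_le_mul_of_nonneg_left hDge (by positivity)
    have h4 : (0:ℝ) ≤ -κ * r ^ 4 * (μ ^ 2 * (1 + μ) ^ 2 - (μ - 1) ^ 2) := by
      have : (0:ℝ) ≤ -κ * r ^ 4 := by positivity
      exact mul_nonneg this hfac
    have hP : (0:ℝ) < (1 + μ) ^ 2 * r ^ 2 := by positivity
    nlinarith [h3, h4, hP]
  have hpos : 0 < ρsq := by rw [hρ]; linarith [hkey]
  refine ⟨hpos, ?_⟩
  have hnp : κ * (μ - 1) ^ 2 * r ^ 4 ≤ 0 := by
    have := mul_nonneg (mul_nonneg hneg.le (sq_nonneg (μ - 1))) (pow_nonneg hr.le 4)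
    linarith
  have hle : ρsq ≤ (1 + μ) ^ 2 * r ^ 2 := by
    rw [hρ]
    have : κ * (μ - 1) ^ 2 * r ^ 4 / D ≤ 0 :=
      div_nonpos_of_nonpos_of_nonneg hnp hDpos.le
    linarith
  have ht : 1 + κ * μ * r ^ 2 < 1 := by nlinarith [mul_pos (mul_pos hneg hμ0) hr2]
  have hm : ρsq * (1 + κ * μ * r ^ 2) < ρsq * 1 := mul_lt_mul_of_pos_left ht hpos
  have hR : 0 < (1 + μ) ^ 2 * r ^ 2 := by positivity
  linarith
end

section
/- Let κ > 0, μ ≥ 1, and r > 0 with κr² < 1 and κμ²r² ≤ 1, and define D = (√(1 − κr²) + √(1 − κμ²r²))² and ρ² = (1 + μ)²r² + κ(μ − 1)²r⁴/D. Then ρ²(1 + κμr²)/2 − (1 + μ)²r² < 0. -/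
open Real

private lemma aux_poly (μ x : ℝ) (hμ : 1 ≤ μ) (hx : 0 < x) (h1 : x < 1)
    (h2 : μ ^ 2 * x ≤ 1) :
    x * (μ - 1) ^ 2 * (1 + μ * x) < (1 + μ) ^ 2 * (1 - μ * x) * (2 - x - μ ^ 2 * x) := by
  obtain ⟨s, hs⟩ : ∃ s, s = μ - 1 := ⟨_, rfl⟩
  obtain ⟨y, hy⟩ : ∃ y, y = 1 - μ ^ 2 * x := ⟨_, rfl⟩
  have hs0 : 0 ≤ s := by rw [hs]; linarith
  have hy0 : 0 ≤ y := by rw [hy]; linarith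
  have hid : μ ^ 3 * ((1 + μ) ^ 2 * (1 - μ * x) * (2 - x - μ ^ 2 * x)
        - x * (μ - 1) ^ 2 * (1 + μ * x))
      = 8 * y ^ 2 + 16 * s * y + 16 * s * y ^ 2 + 6 * s ^ 2 + 31 * s ^ 2 * y
        + 13 * s ^ 2 * y ^ 2 + 11 * s ^ 3 + 21 * s ^ 3 * y + 6 * s ^ 3 * y ^ 2
        + 6 * s ^ 4 + 7 * s ^ 4 * y + s ^ 4 * y ^ 2 + s ^ 5 + s ^ 5 * y := by
    rw [hs, hy]; ring
  have hμ3 : (0 : ℝ) < μ ^ 3 := by positivity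
  have hsy : 0 < s ^ 2 + y ^ 2 := by
    rcases eq_or_lt_of_le hs0 with h | h
    · have hμ1 : μ = 1 := by rw [hs] at h; linarith
      have hy1 : 0 < y := by rw [hy, hμ1]; nlinarith
      positivity
    · positivity
  have t0a : 0 ≤ s ^ 2 := sq_nonneg s
  have t0b : 0 ≤ y ^ 2 := sq_nonneg y
  have t1 : 0 ≤ s * y := mul_nonneg hs0 hy0
  have t2 : 0 ≤ s * y ^ 2 := by positivity
  have t3 : 0 ≤ s ^ 2 * y := by positivity
  have t4 : 0 ≤ s ^ 2 * y ^ 2 := by positivity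
  have t5 : 0 ≤ s ^ 3 := by positivity
  have t6 : 0 ≤ s ^ 3 * y := by positivity
  have t7 : 0 ≤ s ^ 3 * y ^ 2 := by positivity
  have t8 : 0 ≤ s ^ 4 := by positivity
  have t9 : 0 ≤ s ^ 4 * y := by positivity
  have t10 : 0 ≤ s ^ 4 * y ^ 2 := by positivity
  have t11 : 0 ≤ s ^ 5 := by positivity
  have t12 : 0 ≤ s ^ 5 * y := by positivity
  have hg : 0 < μ ^ 3 * ((1 + μ) ^ 2 * (1 - μ * x) * (2 - x - μ ^ 2 * x)
      - x * (μ - 1) ^ 2 * (1 + μ * x)) := by rw [hid]; linarith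
  have hdiv := div_pos hg hμ3
  rw [mul_div_cancel_left₀ _ (ne_of_gt hμ3)] at hdiv
  linarith

/-- Key inequality for Theorem 8(ii): on `S²_κ` (κ > 0), the second factor of the
compatibility condition is strictly negative. -/
theorem sphere_second_factor_negative (κ μ r D ρsq : ℝ)
    (hκ : 0 < κ) (hμ : 1 ≤ μ) (hr : 0 < r)
    (h₁ : κ * r ^ 2 < 1) (h₂ : κ * μ ^ 2 * r ^ 2 ≤ 1)
    (hD : D = (Real.sqrt (1 - κ * r ^ 2) + Real.sqrt (1 - κ * μ ^ 2 * r ^ 2)) ^ 2)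
    (hρ : ρsq = (1 + μ) ^ 2 * r ^ 2 + κ * (μ - 1) ^ 2 * r ^ 4 / D) :
    ρsq * (1 + κ * μ * r ^ 2) / 2 - (1 + μ) ^ 2 * r ^ 2 < 0 := by
  have ha0 : 0 < Real.sqrt (1 - κ * r ^ 2) := Real.sqrt_pos.2 (by linarith)
  have hb0 : 0 ≤ Real.sqrt (1 - κ * μ ^ 2 * r ^ 2) := Real.sqrt_nonneg _
  have ha2 : Real.sqrt (1 - κ * r ^ 2) ^ 2 = 1 - κ * r ^ 2 := Real.sq_sqrt (by linarith)
  have hb2 : Real.sqrt (1 - κ * μ ^ 2 * r ^ 2) ^ 2 = 1 - κ * μ ^ 2 * r ^ 2 :=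
    Real.sq_sqrt (by linarith)
  have hDpos : 0 < D := by rw [hD]; positivity
  have hDge : 2 - κ * r ^ 2 - κ * μ ^ 2 * r ^ 2 ≤ D := by
    have hab : 0 ≤ Real.sqrt (1 - κ * r ^ 2) * Real.sqrt (1 - κ * μ ^ 2 * r ^ 2) :=
      mul_nonneg ha0.le hb0
    rw [hD]; nlinarith [hab, ha2, hb2]
  have hx : 0 < κ * r ^ 2 := mul_pos hκ (pow_pos hr 2)
  have hμx : κ * μ * r ^ 2 < 1 := by
    nlinarith [sq_nonneg (μ - 1), hx]
  have haux := aux_poly μ (κ * r ^ 2) hμ hx h₁ (by nlinarith)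
  have key : κ * (μ - 1) ^ 2 * r ^ 4 * (1 + κ * μ * r ^ 2)
      < (1 + μ) ^ 2 * r ^ 2 * (1 - κ * μ * r ^ 2) * (2 - κ * r ^ 2 - κ * μ ^ 2 * r ^ 2) := by
    have h' := mul_lt_mul_of_pos_left haux (pow_pos hr 2)
    nlinarith [h']
  have hmono : (1 + μ) ^ 2 * r ^ 2 * (1 - κ * μ * r ^ 2) * (2 - κ * r ^ 2 - κ * μ ^ 2 * r ^ 2)
      ≤ (1 + μ) ^ 2 * r ^ 2 * (1 - κ * μ * r ^ 2) * D :=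
    mul_le_mul_of_nonneg_left hDge
      (mul_nonneg (by positivity) (by linarith))
  have hq : κ * (μ - 1) ^ 2 * r ^ 4 / D * (1 + κ * μ * r ^ 2)
      < (1 + μ) ^ 2 * r ^ 2 * (1 - κ * μ * r ^ 2) := by
    rw [div_mul_eq_mul_div, div_lt_iff₀ hDpos]
    linarith
  rw [hρ]
  nlinarith [hq]
end

section
/- There do not exist κ < 0, masses M ≥ m > 0, radii r₁, r₂, r₃ > 0, α ∈ ℝ, θ ∈ (0, π), and ρ > 0 such that, with S_i = √(1 − κr_i²) for i = 1,2,3 and E = ρ³(1 − κρ²/4)^{3/2}, all of the following hold: (i) ρ² = (r₁ + r₂)² + κ(r₁² − r₂²)²/(S₁ + S₂)²; (ii) ρ² = r₁² + r₃² − 2r₁r₃cos θ + κ(r₁² − r₃²)²/(S₁ + S₃)²; (iii) ρ² = r₂² + r₃² + 2r₂r₃cos θ + κ(r₂² − r₃²)²/(S₂ + S₃)²; (iv) α²r₁(1 − κr₁²) = m(r₁ + r₂ − κρ²r₁/2)/E; (v) α²r₂(1 − κr₂²) = M(r₁ + r₂ − κρ²r₂/2)/E; (vi) α²r₃(1 −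 κr₃²) = (M + m)(1 − κρ²/2)r₃/E; (vii) α²r₃(1 − κr₃²)cos θ = −(Mr₁ − mr₂)/E + (M + m)(1 − κρ²/2)r₃cos θ/E. -/
open Real

/-- Theorem 8(i) of the paper in reduced algebraic form: there are no Lagrangian
(equilateral) relative equilibria in `H²_κ` (κ < 0) when one of the three masses is
negligible. -/
theorem no_hyperbolic_lagrangian_one_negligible :
    ¬ ∃ (κ M m r₁ r₂ r₃ α θ ρ : ℝ), κ < 0 ∧ m ≤ M ∧ 0 < m ∧
      0 < r₁ ∧ 0 < r₂ ∧ 0 < r₃ ∧ 0 < θ ∧ θ < Real.pi ∧ 0 < ρ ∧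
      ρ ^ 2 = (r₁ + r₂) ^ 2 + κ * (r₁ ^ 2 - r₂ ^ 2) ^ 2
        / (Real.sqrt (1 - κ * r₁ ^ 2) + Real.sqrt (1 - κ * r₂ ^ 2)) ^ 2 ∧
      ρ ^ 2 = r₁ ^ 2 + r₃ ^ 2 - 2 * r₁ * r₃ * Real.cos θ + κ * (r₁ ^ 2 - r₃ ^ 2) ^ 2
        / (Real.sqrt (1 - κ * r₁ ^ 2) + Real.sqrt (1 - κ * r₃ ^ 2)) ^ 2 ∧
      ρ ^ 2 = r₂ ^ 2 + r₃ ^ 2 + 2 * r₂ * r₃ * Real.cos θ + κ * (r₂ ^ 2 - r₃ ^ 2) ^ 2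
        / (Real.sqrt (1 - κ * r₂ ^ 2) + Real.sqrt (1 - κ * r₃ ^ 2)) ^ 2 ∧
      α ^ 2 * r₁ * (1 - κ * r₁ ^ 2)
        = m * (r₁ + r₂ - κ * ρ ^ 2 * r₁ / 2)
            / (ρ ^ 3 * (1 - κ * ρ ^ 2 / 4) ^ ((3 : ℝ) / 2)) ∧
      α ^ 2 * r₂ * (1 - κ * r₂ ^ 2)
        = M * (r₁ + r₂ - κ * ρ ^ 2 * r₂ / 2)
            / (ρ ^ 3 * (1 - κ * ρ ^ 2 / 4) ^ ((3 : ℝ) / 2)) ∧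
      α ^ 2 * r₃ * (1 - κ * r₃ ^ 2)
        = (M + m) * (1 - κ * ρ ^ 2 / 2) * r₃
            / (ρ ^ 3 * (1 - κ * ρ ^ 2 / 4) ^ ((3 : ℝ) / 2)) ∧
      α ^ 2 * r₃ * (1 - κ * r₃ ^ 2) * Real.cos θ
        = -((M * r₁ - m * r₂) / (ρ ^ 3 * (1 - κ * ρ ^ 2 / 4) ^ ((3 : ℝ) / 2)))
          + (M + m) * (1 - κ * ρ ^ 2 / 2) * r₃ * Real.cos θ
            / (ρ ^ 3 * (1 - κ * ρ ^ 2 / 4) ^ ((3 : ℝ) / 2)) := by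
  rintro ⟨κ, M, m, r₁, r₂, r₃, α, θ, ρ, hκ, hmM, hm, hr₁, hr₂, hr₃, hθ0, hθπ, hρ0,
    hi, hii, hiii, hiv, hv, hvi, hvii⟩
  have hE : 0 < ρ ^ 3 * (1 - κ * ρ ^ 2 / 4) ^ ((3 : ℝ) / 2) := by
    apply mul_pos (pow_pos hρ0 3)
    exact Real.rpow_pos_of_pos (by nlinarith [sq_nonneg ρ]) _
  obtain ⟨E, hEdef⟩ : ∃ E : ℝ, E = ρ ^ 3 * (1 - κ * ρ ^ 2 / 4) ^ ((3 : ℝ) / 2) :=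
    ⟨_, rfl⟩
  rw [← hEdef] at hiv hv hvi hvii hE
  clear hEdef
  have hEne : E ≠ 0 := ne_of_gt hE
  -- Step 1: M r₁ = m r₂
  have h0 : -((M * r₁ - m * r₂) / E) = 0 := by
    linear_combination Real.cos θ * hvi - hvii
  have h12 : M * r₁ = m * r₂ := by
    field_simp at h0; linarith
  -- clear denominators
  rw [eq_div_iff hEne] at hiv hv hvi
  rcases eq_or_ne r₁ r₂ with h | h
  · -- equal radii case
    subst h
    have hMm : M = m := mul_right_cancel₀ (ne_of_gt hr₁) h12
    have h4 : (4 * r₁ * r₃) * Real.cos θ = (4 * r₁ * r₃) * 0 := by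
      linear_combination hii - hiii
    have hc : Real.cos θ = 0 := mul_left_cancel₀ (by positivity) h4
    have hz : κ * (r₁ ^ 2 - r₁ ^ 2) ^ 2
        / (Real.sqrt (1 - κ * r₁ ^ 2) + Real.sqrt (1 - κ * r₁ ^ 2)) ^ 2 = 0 := by
      simp
    have hρ : ρ ^ 2 = 4 * r₁ ^ 2 := by linear_combination hi + hz
    have hcancel : (α ^ 2 * E) * (r₁ * (1 - κ * r₁ ^ 2))
        = (2 * m) * (r₁ * (1 - κ * r₁ ^ 2)) := by
      linear_combination hiv - (m * κ * r₁ / 2) * hρ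
    have h1κ : 0 < 1 - κ * r₁ ^ 2 := by linarith [mul_neg_of_neg_of_pos hκ (pow_pos hr₁ 2)]
    have hα2E : α ^ 2 * E = 2 * m :=
      mul_right_cancel₀ (ne_of_gt (mul_pos hr₁ h1κ)) hcancel
    have hc2 : (2 * m * r₃ * κ) * (r₃ ^ 2) = (2 * m * r₃ * κ) * (2 * r₁ ^ 2) := by
      linear_combination (r₃ * (1 - κ * r₃ ^ 2)) * hα2E - hvi
        + (m * κ * r₃) * hρ - ((1 - κ * ρ ^ 2 / 2) * r₃) * hMm
    have hr₃2 : r₃ ^ 2 = 2 * r₁ ^ 2 :=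
      mul_left_cancel₀ (ne_of_lt (mul_neg_of_pos_of_neg (by positivity) hκ)) hc2
    have hT : κ * (r₁ ^ 2 - r₃ ^ 2) ^ 2
        / (Real.sqrt (1 - κ * r₁ ^ 2) + Real.sqrt (1 - κ * r₃ ^ 2)) ^ 2 ≤ 0 :=
      div_nonpos_of_nonpos_of_nonneg
        (mul_nonpos_iff.mpr (Or.inr ⟨hκ.le, sq_nonneg _⟩)) (by positivity)
    rw [hc] at hii
    linarith [hii, hT, hρ, hr₃2, pow_pos hr₁ 2]
  · -- distinct radii case
    have hFne : κ * r₂ * (r₁ - r₂) ≠ 0 :=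
      mul_ne_zero (mul_ne_zero (ne_of_lt hκ) (ne_of_gt hr₂)) (sub_ne_zero.mpr h)
    have hc1 : (α ^ 2 * r₁ * (r₁ + r₂) * E) * (κ * r₂ * (r₁ - r₂))
        = (m * ρ ^ 2 / 2) * (κ * r₂ * (r₁ - r₂)) := by
      linear_combination r₁ * hv - r₂ * hiv + ((r₁ + r₂) - κ * ρ ^ 2 * r₂ / 2) * h12
    have key1 : α ^ 2 * r₁ * (r₁ + r₂) * E = m * ρ ^ 2 / 2 :=
      mul_right_cancel₀ hFne hc1
    have key2 : α ^ 2 * r₁ * (1 + κ * r₁ * r₂) * E = m * (r₁ + r₂) := by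
      linear_combination hiv + κ * r₁ * key1
    have key3 : m * ((r₁ + r₂) ^ 2) = m * (ρ ^ 2 * (1 + κ * r₁ * r₂) / 2) := by
      linear_combination (1 + κ * r₁ * r₂) * key1 - (r₁ + r₂) * key2
    have hk : (r₁ + r₂) ^ 2 = ρ ^ 2 * (1 + κ * r₁ * r₂) / 2 :=
      mul_left_cancel₀ (ne_of_gt hm) key3
    have hT1 : κ * (r₁ ^ 2 - r₂ ^ 2) ^ 2
        / (Real.sqrt (1 - κ * r₁ ^ 2) + Real.sqrt (1 - κ * r₂ ^ 2)) ^ 2 ≤ 0 :=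
      div_nonpos_of_nonpos_of_nonneg
        (mul_nonpos_iff.mpr (Or.inr ⟨hκ.le, sq_nonneg _⟩)) (by positivity)
    have hle : ρ ^ 2 ≤ (r₁ + r₂) ^ 2 := by linarith [hi, hT1]
    have hneg : κ * (r₁ * r₂ * ρ ^ 2) < 0 :=
      mul_neg_of_neg_of_pos hκ (mul_pos (mul_pos hr₁ hr₂) (pow_pos hρ0 2))
    have hk' : (r₁ + r₂) ^ 2 = ρ ^ 2 / 2 + κ * (r₁ * r₂ * ρ ^ 2) / 2 := by
      linear_combination hk
    linarith [hk', hle, hneg, pow_pos hρ0 2, sq_nonneg (r₁ + r₂)]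
end
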